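/- arXiv:2010.08217 — 2 statements merged into one kernel-verified Lean document; each statement's English description precedes it below -/
import Mathlib

section
/- Suppose there exists a nonempty set 𝒥 ⊆ {1,…,m} such that for i ∈ 𝒥 the function F_i is bounded below by F_i^min on ℝⁿ. Let F^min := min_{i∈𝒥} F_i^min and F_0^max := max_{i∈{1,…,m}} F_i(x^0). Then the multiobjective proximal gradient method with parameter ℓ > L generates a sequence {x^k} satisfying min_{0 ≤ j ≤ k−1} w_1(x^j) ≤ (F_0^max − F^min)·max{1, ℓ} / k for every k ≥ 1. -/
open Filter Topology

noncomputable section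

/-- Convexity for extended-real-valued functions. -/
def ERealConvexOn {E : Type*} [AddCommGroup E] [Module ℝ E] (g : E → EReal) : Prop :=
  ∀ x y : E, ∀ a b : ℝ, 0 ≤ a → 0 ≤ b → a + b = 1 →
    g (a • x + b • y) ≤ (a : EReal) * g x + (b : EReal) * g y

/-- Strong convexity (modulus σ) for extended-real-valued functions. -/
def ERealStrongConvexOn {E : Type*} [NormedAddCommGroup E] [NormedSpace ℝ E]
    (σ : ℝ) (g : E → EReal) : Prop :=
  ∀ x y : E, ∀ a b : ℝ, 0 ≤ a → 0 ≤ b → a + b = 1 →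
    g (a • x + b • y) + ((σ / 2 * (a * b) * ‖x - y‖ ^ 2 : ℝ) : EReal)
      ≤ (a : EReal) * g x + (b : EReal) * g y

/-- Directional derivative (as a limit, encoded by `liminf`, of forward difference quotients). -/
def dirDeriv {E : Type*} [NormedAddCommGroup E] [NormedSpace ℝ E]
    (φ : E → EReal) (x d : E) : EReal :=
  Filter.liminf (fun t : ℝ => ((t⁻¹ : ℝ) : EReal) * (φ (x + t • d) - φ x)) (𝓝[>] (0 : ℝ))

/-- The merit function u₀. -/
def u0 {n m : ℕ} (F : Fin m → EuclideanSpace ℝ (Fin n) → EReal)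
    (x : EuclideanSpace ℝ (Fin n)) : EReal :=
  ⨆ y : EuclideanSpace ℝ (Fin n), ⨅ i, (F i x - F i y)

/-- The regularized merit function w_ℓ. -/
def wfun {n m : ℕ} (f : Fin m → EuclideanSpace ℝ (Fin n) → ℝ)
    (g : Fin m → EuclideanSpace ℝ (Fin n) → EReal) (ℓ : ℝ)
    (x : EuclideanSpace ℝ (Fin n)) : EReal :=
  ⨆ y : EuclideanSpace ℝ (Fin n), ⨅ i,
    (((inner ℝ (gradient (f i) x) (x - y) : ℝ)) : EReal) + (g i x - g i y)
      - ((ℓ / 2 * ‖x - y‖ ^ 2 : ℝ) : EReal)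

/-- The mapping ψ_x. -/
def psi {n m : ℕ} (f : Fin m → EuclideanSpace ℝ (Fin n) → ℝ)
    (g : Fin m → EuclideanSpace ℝ (Fin n) → EReal)
    (x d : EuclideanSpace ℝ (Fin n)) : EReal :=
  ⨆ i, ((inner ℝ (gradient (f i) x) d : ℝ) : EReal) + (g i (x + d) - g i x)

/-!
Each proximal step is a sufficient-decrease step. Write `p_k := ψ_{x^k}(d^k) + (ℓ/2)‖d^k‖²`.
The descent lemma (with `L_i ≤ ℓ`) gives `F_i(x^{k+1}) ≤ F_i(x^k) + p_k`, and since
`w_ℓ(x) = -min_d (ψ_x(d) + (ℓ/2)‖d‖²)` we have `w_ℓ(x^k) = -p_k`. Telescoping along an index of `𝒥`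
bounds `∑_{j<k} w_ℓ(x^j)` by `F₀^max - F^min`, so the smallest term is at most a `1/k` fraction
of it. Finally `w_1 ≤ max{1, ℓ} w_ℓ`: for `ℓ ≤ 1` by monotonicity in `ℓ`, and for `ℓ ≥ 1`
because convexity of the `g_i` gives `ψ_x(d/ℓ) ≤ ψ_x(d)/ℓ`.
-/

open Finset
open scoped NNReal InnerProductSpace

theorem image_add_le_of_lipschitzWith_gradient {E : Type*} [NormedAddCommGroup E]
    [InnerProductSpace ℝ E] [CompleteSpace E] {f : E → ℝ} (hf : Differentiable ℝ f) {C : ℝ≥0}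
    (hlip : LipschitzWith C (gradient f)) (x d : E) :
    f (x + d) ≤ f x + ⟪gradient f x, d⟫_ℝ + C / 2 * ‖d‖ ^ 2 := by
  have hline : ∀ t : ℝ,
      HasDerivAt (fun s : ℝ => f (x + s • d)) ⟪gradient f (x + t • d), d⟫_ℝ t := by
    intro t
    have := (hf (x + t • d)).hasFDerivAt.comp_hasDerivAt t
      (((hasDerivAt_id' t).smul_const d).const_add x)
    rwa [one_smul, ← InnerProductSpace.toDual_symm_apply] at this
  have hquad : ∀ t : ℝ,
      HasDerivAt (fun s : ℝ => f x + s * ⟪gradient f x, d⟫_ℝ + C / 2 * s ^ 2 * ‖d‖ ^ 2)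
        (⟪gradient f x, d⟫_ℝ + C * t * ‖d‖ ^ 2) t := by
    intro t
    refine ((((hasDerivAt_id' t).mul_const _).const_add (f x)).add
      (((hasDerivAt_pow 2 t).const_mul (C / 2 : ℝ)).mul_const (‖d‖ ^ 2))).congr_deriv ?_
    ring
  have hslope : ∀ t ∈ Set.Ico (0 : ℝ) 1,
      ⟪gradient f (x + t • d), d⟫_ℝ ≤ ⟪gradient f x, d⟫_ℝ + C * t * ‖d‖ ^ 2 := by
    rintro t ⟨ht, -⟩
    have hdist : ‖gradient f (x + t • d) - gradient f x‖ ≤ C * (t * ‖d‖) := by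
      simpa [dist_eq_norm, norm_smul, abs_of_nonneg ht] using hlip.dist_le_mul (x + t • d) x
    have := (real_inner_le_norm _ d).trans (mul_le_mul_of_nonneg_right hdist (norm_nonneg d))
    rw [inner_sub_left] at this
    nlinarith
  simpa using image_le_of_deriv_right_le_deriv_boundary (a := 0) (b := 1)
    (fun t _ => (hline t).continuousAt.continuousWithinAt) (fun t _ => (hline t).hasDerivWithinAt)
    (by simp) (fun t _ => (hquad t).continuousAt.continuousWithinAt)
    (fun t _ => (hquad t).hasDerivWithinAt) hslope (Set.right_mem_Icc.2 zero_le_one)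

namespace EReal

theorem iSup_add_coe {ι : Sort*} (u : ι → EReal) (c : ℝ) : (⨆ i, u i) + c = ⨆ i, (u i + c) := by
  refine le_antisymm ?_ (iSup_le fun i => add_le_add_left (le_iSup u i) _)
  rw [← sub_add_cancel (a := ⨆ i, (u i + c)) (b := c)]
  refine add_le_add_left (iSup_le fun i => ?_) _
  rw [← add_sub_cancel_right (a := u i) (b := c)]
  exact sub_le_sub (le_iSup (fun i => u i + c) i) le_rfl

theorem neg_iSup {ι : Sort*} (u : ι → EReal) : -(⨆ i, u i) = ⨅ i, -u i :=
  le_antisymm (le_iInf fun i => EReal.neg_le_neg_iff.2 (le_iSup u i))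
    (EReal.le_neg_of_le_neg (iSup_le fun i => EReal.le_neg_of_le_neg (iInf_le _ i)))

theorem le_add_coe_sum_range {u : ℕ → EReal} {p : ℕ → ℝ} (h : ∀ j, u (j + 1) ≤ u j + p j) :
    ∀ k, u k ≤ u 0 + ↑(∑ j ∈ range k, p j)
  | 0 => by simp
  | k + 1 => by
    rw [sum_range_succ, coe_add, ← add_assoc]
    exact (h k).trans (add_le_add_left (le_add_coe_sum_range h k) _)

theorem coe_sum_range_neg_le_sub {u : ℕ → EReal} {p : ℕ → ℝ} (h : ∀ j, u (j + 1) ≤ u j + p j)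
    {k : ℕ} {a : ℝ} {b : EReal} (ha : a ≤ u k) (hb : u 0 ≤ b) :
    ↑(∑ j ∈ range k, -p j) ≤ b - a := by
  rw [le_sub_iff_add_le (.inl (coe_ne_bot _)) (.inl (coe_ne_top _)), sum_neg_distrib]
  calc ↑(-∑ j ∈ range k, p j) + a ≤ ↑(-∑ j ∈ range k, p j) + (u 0 + ↑(∑ j ∈ range k, p j)) := by
        gcongr
        exact ha.trans (le_add_coe_sum_range h k)
    _ = u 0 := by rw [add_left_comm, ← coe_add, neg_add_cancel, coe_zero, add_zero]
    _ ≤ b := hb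

end EReal

theorem iInf_range_le_coe_sum_div {k : ℕ} (hk : 0 < k) {a : ℕ → EReal} {q : ℕ → ℝ}
    (ha : ∀ j, a j ≤ q j) : ⨅ j ∈ range k, a j ≤ ↑((∑ j ∈ range k, q j) / k) := by
  obtain ⟨j, hj, hmin⟩ := exists_min_image (range k) q (nonempty_range_iff.2 hk.ne')
  have hsum : k * q j ≤ ∑ j ∈ range k, q j := by
    simpa using card_nsmul_le_sum (range k) q (q j) hmin
  refine (iInf₂_le j hj).trans ((ha j).trans (EReal.coe_le_coe_iff.2 ?_))
  rw [le_div_iff₀ (by exact_mod_cast hk)]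
  linarith

theorem iInf_range_le_mul_coe_div {k : ℕ} (hk : 0 < k) {a : ℕ → EReal} {q : ℕ → ℝ} {M : ℝ}
    (hM : 0 ≤ M) {B : EReal} (ha : ∀ j, a j ≤ ↑(M * q j)) (hB : ↑(∑ j ∈ range k, q j) ≤ B) :
    ⨅ j ∈ range k, a j ≤ B * ↑(M / k) :=
  calc ⨅ j ∈ range k, a j ≤ ↑((∑ j ∈ range k, M * q j) / k) := iInf_range_le_coe_sum_div hk ha
    _ = ↑(∑ j ∈ range k, q j) * ↑(M / k) := by
        rw [← mul_sum, ← EReal.coe_mul]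
        ring_nf
    _ ≤ B * ↑(M / k) := mul_le_mul_of_nonneg_right hB (EReal.coe_nonneg.2 (by positivity))

section ProximalGradient

variable {n m : ℕ} {f : Fin m → EuclideanSpace ℝ (Fin n) → ℝ}
  {g : Fin m → EuclideanSpace ℝ (Fin n) → EReal}

section Point

variable {x : EuclideanSpace ℝ (Fin n)}

theorem psi_zero [Nonempty (Fin m)] (hgx : ∀ i, g i x ≠ ⊤) (hgx' : ∀ i, g i x ≠ ⊥) :
    psi f g x 0 = 0 := by
  simp [psi, EReal.sub_self (hgx _) (hgx' _)]

theorem wfun_eq_iSup_neg (hgx : ∀ i, g i x ≠ ⊤) (hgx' : ∀ i, g i x ≠ ⊥) (ℓ : ℝ) :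
    wfun f g ℓ x = ⨆ d, -(psi f g x d + ((ℓ / 2 * ‖d‖ ^ 2 : ℝ) : EReal)) := by
  rw [wfun, ← (Equiv.addLeft x).iSup_comp]
  refine iSup_congr fun d => ?_
  rw [psi, EReal.iSup_add_coe, EReal.neg_iSup]
  refine iInf_congr fun i => ?_
  lift g i x to ℝ using ⟨hgx i, hgx' i⟩ with G
  simp only [Equiv.coe_addLeft, sub_add_cancel_left, inner_neg_right, norm_neg]
  generalize (ℓ / 2 * ‖d‖ ^ 2 : ℝ) = c
  induction g i (x + d) using EReal.rec with
  | bot => simp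
  | top => simp
  | coe z => norm_cast; ring

theorem psi_smul_le (hconv : ∀ i, ERealConvexOn (g i)) (hgx : ∀ i, g i x ≠ ⊤)
    (hgx' : ∀ i, g i x ≠ ⊥) {t : ℝ} (ht₀ : 0 < t) (ht₁ : t ≤ 1) (d : EuclideanSpace ℝ (Fin n)) :
    psi f g x (t • d) ≤ t * psi f g x d := by
  refine iSup_le fun i => ?_
  refine le_trans ?_ (mul_le_mul_of_nonneg_left (le_iSup _ i) (EReal.coe_nonneg.2 ht₀.le))
  have hconvex := hconv i x (x + d) (1 - t) t (by linarith) ht₀.le (by ring)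
  rw [show (1 - t) • x + t • (x + d) = x + t • d by module] at hconvex
  lift g i x to ℝ using ⟨hgx i, hgx' i⟩ with G
  rw [inner_smul_right]
  generalize g i (x + t • d) = w, g i (x + d) = z at hconvex ⊢
  induction z using EReal.rec with
  | bot =>
    rw [EReal.coe_mul_bot_of_pos ht₀, EReal.add_bot, le_bot_iff] at hconvex
    simp [hconvex]
  | top => simp [EReal.coe_mul_top_of_pos ht₀]
  | coe z =>
    induction w using EReal.rec with
    | bot => simp
    | top => exact absurd hconvex (by norm_cast)
    | coe w =>
      norm_cast at hconvex ⊢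
      nlinarith

theorem wfun_one_le_max_mul_wfun (hconv : ∀ i, ERealConvexOn (g i)) (hgx : ∀ i, g i x ≠ ⊤)
    (hgx' : ∀ i, g i x ≠ ⊥) (ℓ : ℝ) : wfun f g 1 x ≤ ↑(max 1 ℓ) * wfun f g ℓ x := by
  rw [wfun_eq_iSup_neg hgx hgx', wfun_eq_iSup_neg hgx hgx']
  rcases le_total ℓ 1 with hℓ | hℓ
  · rw [max_eq_left hℓ, EReal.coe_one, one_mul]
    refine iSup_mono fun d => EReal.neg_le_neg_iff.2 ?_
    gcongr
  rw [max_eq_right hℓ]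
  have hℓ₀ : (0 : ℝ) < ℓ := zero_lt_one.trans_le hℓ
  refine iSup_le fun d => ?_
  have hscaled : psi f g x (ℓ⁻¹ • d) + ((ℓ / 2 * ‖ℓ⁻¹ • d‖ ^ 2 : ℝ) : EReal) ≤
      ↑ℓ⁻¹ * (psi f g x d + ((1 / 2 * ‖d‖ ^ 2 : ℝ) : EReal)) := by
    rw [EReal.left_distrib_of_nonneg_of_ne_top (EReal.coe_nonneg.2 (inv_nonneg.2 hℓ₀.le))
      (EReal.coe_ne_top _), ← EReal.coe_mul]
    refine add_le_add (psi_smul_le hconv hgx hgx' (inv_pos.2 hℓ₀) (inv_le_one_of_one_le₀ hℓ) d)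
      (le_of_eq ?_)
    rw [norm_smul, Real.norm_of_nonneg (inv_nonneg.2 hℓ₀.le)]
    field_simp
  calc -(psi f g x d + ((1 / 2 * ‖d‖ ^ 2 : ℝ) : EReal))
      = ↑ℓ * -(↑ℓ⁻¹ * (psi f g x d + ((1 / 2 * ‖d‖ ^ 2 : ℝ) : EReal))) := by
        rw [mul_neg, ← mul_assoc, ← EReal.coe_mul, mul_inv_cancel₀ hℓ₀.ne', EReal.coe_one,
          one_mul]
    _ ≤ ↑ℓ * -(psi f g x (ℓ⁻¹ • d) + ((ℓ / 2 * ‖ℓ⁻¹ • d‖ ^ 2 : ℝ) : EReal)) :=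
        mul_le_mul_of_nonneg_left (EReal.neg_le_neg_iff.2 hscaled) (EReal.coe_nonneg.2 hℓ₀.le)
    _ ≤ ↑ℓ * ⨆ d, -(psi f g x d + ((ℓ / 2 * ‖d‖ ^ 2 : ℝ) : EReal)) :=
        mul_le_mul_of_nonneg_left
          (le_iSup (fun d => -(psi f g x d + ((ℓ / 2 * ‖d‖ ^ 2 : ℝ) : EReal))) _)
          (EReal.coe_nonneg.2 hℓ₀.le)

theorem coe_add_le_add_psi {i : Fin m} {C : ℝ≥0} {ℓ : ℝ} (hf : Differentiable ℝ (f i))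
    (hlip : LipschitzWith C (gradient (f i))) (hCℓ : (C : ℝ) ≤ ℓ) (hgx : g i x ≠ ⊤)
    (hgx' : g i x ≠ ⊥) (d : EuclideanSpace ℝ (Fin n)) :
    ↑(f i (x + d)) + g i (x + d) ≤
      ↑(f i x) + g i x + (psi f g x d + ((ℓ / 2 * ‖d‖ ^ 2 : ℝ) : EReal)) := by
  have hquad : f i (x + d) ≤ f i x + ⟪gradient (f i) x, d⟫_ℝ + ℓ / 2 * ‖d‖ ^ 2 :=
    (image_add_le_of_lipschitzWith_gradient hf hlip x d).trans (by gcongr)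
  calc ↑(f i (x + d)) + g i (x + d)
      ≤ ((f i x + ⟪gradient (f i) x, d⟫_ℝ + ℓ / 2 * ‖d‖ ^ 2 : ℝ) : EReal) + g i (x + d) := by
        gcongr
    _ = ↑(f i x) + g i x + (↑⟪gradient (f i) x, d⟫_ℝ + (g i (x + d) - g i x) +
          ((ℓ / 2 * ‖d‖ ^ 2 : ℝ) : EReal)) := by
        lift g i x to ℝ using ⟨hgx, hgx'⟩ with G
        generalize ⟪gradient (f i) x, d⟫_ℝ = a, (ℓ / 2 * ‖d‖ ^ 2 : ℝ) = c
        induction g i (x + d) using EReal.rec with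
        | bot => simp
        | top => simp
        | coe z => norm_cast; ring
    _ ≤ ↑(f i x) + g i x + (psi f g x d + ((ℓ / 2 * ‖d‖ ^ 2 : ℝ) : EReal)) := by
        gcongr
        exact le_iSup (fun j => (⟪gradient (f j) x, d⟫_ℝ : EReal) + (g j (x + d) - g j x)) i

theorem exists_prox_step [Nonempty (Fin m)] {C : Fin m → ℝ≥0} {ℓ : ℝ}
    (hf : ∀ i, Differentiable ℝ (f i)) (hlip : ∀ i, LipschitzWith (C i) (gradient (f i)))
    (hCℓ : ∀ i, (C i : ℝ) ≤ ℓ) (hg : ∀ i y, g i y ≠ ⊥) (hgx : ∀ i, g i x ≠ ⊤)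
    {d : EuclideanSpace ℝ (Fin n)}
    (hd : ∀ d', psi f g x d + ((ℓ / 2 * ‖d‖ ^ 2 : ℝ) : EReal) ≤
      psi f g x d' + ((ℓ / 2 * ‖d'‖ ^ 2 : ℝ) : EReal)) :
    ∃ p : ℝ, (∀ i, ↑(f i (x + d)) + g i (x + d) ≤ ↑(f i x) + g i x + p) ∧
      wfun f g ℓ x = -p := by
  set P := psi f g x d + ((ℓ / 2 * ‖d‖ ^ 2 : ℝ) : EReal) with hP
  have hdesc i : ↑(f i (x + d)) + g i (x + d) ≤ ↑(f i x) + g i x + P :=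
    coe_add_le_add_psi (hf i) (hlip i) (hCℓ i) (hgx i) (hg i x) d
  have hnonpos : P ≤ 0 := by simpa [psi_zero hgx (hg · x)] using hd 0
  have hne_bot : P ≠ ⊥ := by
    intro hbot
    have := hdesc (Classical.arbitrary _)
    simp [hbot, EReal.add_eq_bot_iff, hg] at this
  clear_value P
  obtain ⟨p, rfl⟩ : ∃ p : ℝ, (p : EReal) = P :=
    ⟨P.toReal, EReal.coe_toReal (ne_top_of_le_ne_top EReal.zero_ne_top hnonpos) hne_bot⟩
  refine ⟨p, hdesc, ?_⟩
  rw [wfun_eq_iSup_neg hgx (hg · x)]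
  exact le_antisymm (iSup_le fun d' => EReal.neg_le_neg_iff.2 (hd d'))
    (le_iSup_of_le d (by rw [← hP]))

end Point

theorem prox_iterate_ne_top [Nonempty (Fin m)] {C : Fin m → ℝ≥0} {ℓ : ℝ}
    (hf : ∀ i, Differentiable ℝ (f i)) (hlip : ∀ i, LipschitzWith (C i) (gradient (f i)))
    (hCℓ : ∀ i, (C i : ℝ) ≤ ℓ) (hg : ∀ i y, g i y ≠ ⊥) {x d : ℕ → EuclideanSpace ℝ (Fin n)}
    (hmin : ∀ k d', psi f g (x k) (d k) + ((ℓ / 2 * ‖d k‖ ^ 2 : ℝ) : EReal) ≤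
      psi f g (x k) d' + ((ℓ / 2 * ‖d'‖ ^ 2 : ℝ) : EReal))
    (hstep : ∀ k, x (k + 1) = x k + d k) (hx₀ : ∀ i, g i (x 0) ≠ ⊤) :
    ∀ k i, g i (x k) ≠ ⊤ := by
  intro k
  induction k with
  | zero => exact hx₀
  | succ k ih =>
    obtain ⟨p, hdesc, -⟩ := exists_prox_step hf hlip hCℓ hg ih (hmin k)
    intro i htop
    have := hdesc i
    lift g i (x k) to ℝ using ⟨ih i, hg i _⟩ with G
    rw [← hstep, htop, EReal.add_top_of_ne_bot (EReal.coe_ne_bot _), top_le_iff] at this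
    exact EReal.coe_ne_top _ (by exact_mod_cast this)

end ProximalGradient

theorem proximal_gradient_rate_nonconvex_general
    {n m : ℕ}
    (f : Fin m → EuclideanSpace ℝ (Fin n) → ℝ)
    (g : Fin m → EuclideanSpace ℝ (Fin n) → EReal)
    (hf : ∀ i, ContDiff ℝ 1 (f i))
    (hg_ne_bot : ∀ i x, g i x ≠ ⊥)
    (hg_convex : ∀ i, ERealConvexOn (g i))
    (F : Fin m → EuclideanSpace ℝ (Fin n) → EReal)
    (hF : ∀ i x, F i x = (f i x : EReal) + g i x)
    (Li : Fin m → ℝ) (hLi : ∀ i, 0 < Li i)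
    (hlip : ∀ i, LipschitzWith (Li i).toNNReal (gradient (f i)))
    (L : ℝ) (hL : IsGreatest (Set.range Li) L)
    (ℓ : ℝ) (hℓ : L < ℓ)
    (x d : ℕ → EuclideanSpace ℝ (Fin n))
    (hmin : ∀ (k : ℕ) (d' : EuclideanSpace ℝ (Fin n)),
      psi f g (x k) (d k) + ((ℓ / 2 * ‖d k‖ ^ 2 : ℝ) : EReal) ≤
        psi f g (x k) d' + ((ℓ / 2 * ‖d'‖ ^ 2 : ℝ) : EReal))
    (hstep : ∀ k, x (k + 1) = x k + d k)
    (J : Finset (Fin m)) (hJ : J.Nonempty)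
    (Fimin : Fin m → ℝ)
    (hbdd : ∀ i ∈ J, ∀ z, (Fimin i : EReal) ≤ F i z)
    (Fmin : ℝ) (hFmin : Fmin = J.inf' hJ Fimin)
    (F0max : EReal) (hF0max : F0max = ⨆ i, F i (x 0)) :
    ∀ k : ℕ, 1 ≤ k →
      (⨅ j ∈ Finset.range k, wfun f g 1 (x j)) ≤
        (F0max - (Fmin : EReal)) * ((max 1 ℓ / (k : ℝ) : ℝ) : EReal) := by
  intro k hk
  have : Nonempty (Fin m) := ⟨hJ.choose⟩
  have hf' i : Differentiable ℝ (f i) := (hf i).differentiable one_ne_zero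
  have hLℓ i : ((Li i).toNNReal : ℝ) ≤ ℓ :=
    (Real.coe_toNNReal _ (hLi i).le).trans_le ((hL.2 ⟨i, rfl⟩).trans hℓ.le)
  rcases eq_or_ne F0max ⊤ with htop | htop
  · rw [htop, EReal.top_sub_coe, EReal.top_mul_of_pos (EReal.coe_pos.2 (by positivity))]
    exact le_top
  have hx₀ i : g i (x 0) ≠ ⊤ := fun hi => htop <| top_le_iff.1 <| hF0max ▸
    le_iSup_of_le i (by rw [hF, hi, EReal.add_top_of_ne_bot (EReal.coe_ne_bot _)])
  have hfinite := prox_iterate_ne_top hf' hlip hLℓ hg_ne_bot hmin hstep hx₀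
  choose p hdesc hw using fun k => exists_prox_step hf' hlip hLℓ hg_ne_bot (hfinite k) (hmin k)
  obtain ⟨i₀, hi₀⟩ := id hJ
  have hdecrease : ↑(∑ j ∈ range k, -p j) ≤ F0max - Fmin :=
    EReal.coe_sum_range_neg_le_sub (u := fun j => F i₀ (x j))
      (fun j => by simpa only [hF, hstep] using hdesc j i₀)
      ((EReal.coe_le_coe_iff.2 (hFmin ▸ J.inf'_le Fimin hi₀)).trans (hbdd i₀ hi₀ _))
      (hF0max ▸ le_iSup (fun i => F i (x 0)) i₀)
  refine iInf_range_le_mul_coe_div hk (zero_le_one.trans (le_max_left 1 ℓ)) (fun j => ?_) hdecrease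
  rw [EReal.coe_mul, EReal.coe_neg, ← hw j]
  exact wfun_one_le_max_mul_wfun hg_convex (hfinite j) (hg_ne_bot · _) ℓ

/-- Global rate for the non-convex case: if some of the objectives are bounded below,
the multiobjective proximal gradient method with ℓ > L satisfies
min_{0 ≤ j ≤ k−1} w₁(x^j) ≤ (F₀^max − F^min)·max{1, ℓ}/k for every k ≥ 1. -/
theorem proximal_gradient_rate_nonconvex
    {n m : ℕ} (hm : 0 < m)
    (f : Fin m → EuclideanSpace ℝ (Fin n) → ℝ)
    (g : Fin m → EuclideanSpace ℝ (Fin n) → EReal)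
    (hf : ∀ i, ContDiff ℝ 1 (f i))
    (hg_lsc : ∀ i, LowerSemicontinuous (g i))
    (hg_ne_bot : ∀ i x, g i x ≠ ⊥)
    (hg_proper : ∀ i, ∃ x, g i x ≠ ⊤)
    (hg_convex : ∀ i, ERealConvexOn (g i))
    (F : Fin m → EuclideanSpace ℝ (Fin n) → EReal)
    (hF : ∀ i x, F i x = (f i x : EReal) + g i x)
    (Li : Fin m → ℝ) (hLi : ∀ i, 0 < Li i)
    (hlip : ∀ i, LipschitzWith (Li i).toNNReal (gradient (f i)))
    (L : ℝ) (hL : IsGreatest (Set.range Li) L)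
    (ℓ : ℝ) (hℓ : L < ℓ)
    (x d : ℕ → EuclideanSpace ℝ (Fin n))
    (hmin : ∀ (k : ℕ) (d' : EuclideanSpace ℝ (Fin n)),
      psi f g (x k) (d k) + ((ℓ / 2 * ‖d k‖ ^ 2 : ℝ) : EReal) ≤
        psi f g (x k) d' + ((ℓ / 2 * ‖d'‖ ^ 2 : ℝ) : EReal))
    (hstep : ∀ k, x (k + 1) = x k + d k)
    (J : Finset (Fin m)) (hJ : J.Nonempty)
    (Fimin : Fin m → ℝ)
    (hbdd : ∀ i ∈ J, ∀ z, (Fimin i : EReal) ≤ F i z)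
    (Fmin : ℝ) (hFmin : Fmin = J.inf' hJ Fimin)
    (F0max : EReal) (hF0max : F0max = ⨆ i, F i (x 0)) :
    ∀ k : ℕ, 1 ≤ k →
      (⨅ j ∈ Finset.range k, wfun f g 1 (x j)) ≤
        (F0max - (Fmin : EReal)) * ((max 1 ℓ / (k : ℝ) : ℝ) : EReal) :=
  proximal_gradient_rate_nonconvex_general f g hf hg_ne_bot hg_convex F hF Li hLi hlip L hL ℓ hℓ x d
    hmin hstep J hJ Fimin hbdd Fmin hFmin F0max hF0max
end
end

section
/- Suppose each f_i is strongly convex with modulus μ_i > 0 and let μ := min_{i∈{1,…,m}} μ_i. Then the multiobjective proximal gradient method with ℓ > L generates a sequence {x^k} satisfying u_0(x^{k+1}) ≤ (1 − L/(ℓ·max{L/μ, 1}))·u_0(x^k) for all k. -/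
open Filter Topology

noncomputable section

/-!
Fix an iterate `x`, its step `d`, a competitor `y`, and an index `i` minimising
`F i x - F i y =: b`, so that `b ≤ u₀(x)`. The descent lemma gives
`F i (x + d) ≤ F i x + ψ_x(d) + ℓ/2‖d‖²`, and since `d` minimises the right-hand side this is at
most `F i x + ψ_x(t(y - x)) + ℓ/2‖t(y - x)‖²` with `t = L / (ℓ max (L/μ) 1)`. Strong convexity
of every `f j` and convexity of every `g j` bound `ψ_x(t(y - x))` by `-t b - tμ/2‖y - x‖²`, and
`ℓ t ≤ μ` absorbs the quadratic term. Hence `F i (x + d) - F i y ≤ (1 - t) b ≤ (1 - t) u₀(x)`.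
-/

open Set
open scoped NNReal RealInnerProductSpace

theorem StrongConvexOn.comp_add_smul {E : Type*} [NormedAddCommGroup E] [NormedSpace ℝ E]
    {φ : E → ℝ} {μ : ℝ} (hφ : StrongConvexOn univ μ φ) (x v : E) :
    StrongConvexOn univ (μ * ‖v‖ ^ 2) (fun t : ℝ => φ (x + t • v)) := by
  refine ⟨convex_univ, fun s _ t _ a b ha hb hab => ?_⟩
  have hpt : a • (x + s • v) + b • (x + t • v) = x + (a • s + b • t) • v := by
    linear_combination (norm := module) hab • x
  have hnorm : ‖(x + s • v) - (x + t • v)‖ = ‖s - t‖ * ‖v‖ := by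
    rw [add_sub_add_left_eq_sub, ← sub_smul, norm_smul]
  have := hφ.2 (mem_univ (x + s • v)) (mem_univ (x + t • v)) ha hb hab
  rw [hpt, hnorm] at this
  simp only [smul_eq_mul] at this ⊢
  linarith

section Gradient

variable {E : Type*} [NormedAddCommGroup E] [InnerProductSpace ℝ E] [CompleteSpace E]

theorem hasDerivAt_comp_add_smul {φ : E → ℝ} {x d : E} {t : ℝ}
    (hφ : DifferentiableAt ℝ φ (x + t • d)) :
    HasDerivAt (fun s : ℝ => φ (x + s • d)) ⟪gradient φ (x + t • d), d⟫ t := by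
  have hline : HasDerivAt (fun s : ℝ => x + s • d) d t :=
    ((hasDerivAt_id t).smul_const d).const_add x |>.congr_deriv (one_smul ℝ d)
  rw [inner_gradient_left]
  exact hφ.hasFDerivAt.comp_hasDerivAt t hline

theorem Differentiable.le_add_inner_gradient_add_sq {φ : E → ℝ} {K : ℝ≥0}
    (hφ : Differentiable ℝ φ) (hK : LipschitzWith K (gradient φ)) (x d : E) :
    φ (x + d) ≤ φ x + ⟪gradient φ x, d⟫ + K / 2 * ‖d‖ ^ 2 := by
  have hline (t : ℝ) := hasDerivAt_comp_add_smul (d := d) (t := t) (hφ (x + t • d))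
  have hquad (t : ℝ) : HasDerivAt
      (fun s : ℝ => φ x + s * ⟪gradient φ x, d⟫ + s ^ 2 * (K / 2 * ‖d‖ ^ 2))
      (⟪gradient φ x, d⟫ + 2 * t * (K / 2 * ‖d‖ ^ 2)) t := by
    refine ((((hasDerivAt_id t).mul_const _).const_add _).fun_add
      ((hasDerivAt_pow 2 t).mul_const _)).congr_deriv ?_
    simp
  have hbound (t : ℝ) (ht : 0 ≤ t) :
      ⟪gradient φ (x + t • d), d⟫ ≤ ⟪gradient φ x, d⟫ + 2 * t * (K / 2 * ‖d‖ ^ 2) := by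
    have hdist : ‖gradient φ (x + t • d) - gradient φ x‖ ≤ K * (t * ‖d‖) := by
      simpa [dist_eq_norm, norm_smul, abs_of_nonneg ht] using hK.dist_le_mul (x + t • d) x
    calc ⟪gradient φ (x + t • d), d⟫
        = ⟪gradient φ x, d⟫ + ⟪gradient φ (x + t • d) - gradient φ x, d⟫ := by
          rw [inner_sub_left]; ring
      _ ≤ ⟪gradient φ x, d⟫ + K * (t * ‖d‖) * ‖d‖ := by
          gcongr
          exact (real_inner_le_norm _ _).trans (by gcongr)
      _ = _ := by ring
  have := image_le_of_deriv_right_le_deriv_boundary (a := 0) (b := 1)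
    (fun t _ => (hline t).continuousAt.continuousWithinAt)
    (fun t _ => (hline t).hasDerivWithinAt) (by simp)
    (fun t _ => (hquad t).continuousAt.continuousWithinAt)
    (fun t _ => (hquad t).hasDerivWithinAt) (fun t ht => hbound t ht.1)
    (right_mem_Icc.2 zero_le_one)
  simpa using this

theorem StrongConvexOn.add_inner_gradient_add_sq_le {φ : E → ℝ} {μ : ℝ} {x : E}
    (hsc : StrongConvexOn univ μ φ) (hφ : DifferentiableAt ℝ φ x) (y : E) :
    φ x + ⟪gradient φ x, y - x⟫ + μ / 2 * ‖y - x‖ ^ 2 ≤ φ y := by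
  have hconv := strongConvexOn_iff_convex.1 (hsc.comp_add_smul x (y - x))
  simp only [Real.norm_eq_abs, sq_abs] at hconv
  have hderiv : HasDerivAt (fun t : ℝ => φ (x + t • (y - x)) - μ * ‖y - x‖ ^ 2 / 2 * t ^ 2)
      ⟪gradient φ x, y - x⟫ 0 := by
    have hline := hasDerivAt_comp_add_smul (d := y - x) (t := 0) (by simpa using hφ)
    refine (hline.sub ((hasDerivAt_pow 2 0).const_mul _)).congr_deriv ?_
    simp
  have := hconv.le_slope_of_hasDerivAt (mem_univ 0) (mem_univ 1) zero_lt_one hderiv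
  simp only [slope_def_field, one_smul, zero_smul, add_zero, add_sub_cancel, one_pow, mul_one,
    zero_pow two_ne_zero, mul_zero, sub_zero, div_one] at this
  linarith

theorem inner_gradient_add_sub_le_of_strongConvexOn {φ : E → ℝ} {γ : E → EReal} {x y : E}
    {t μ b : ℝ} (hφ : DifferentiableAt ℝ φ x) (hsc : StrongConvexOn univ μ φ)
    (hγ : ERealConvexOn γ) (hγx_ne_bot : γ x ≠ ⊥) (hγy_ne_top : γ y ≠ ⊤) (hγy_ne_bot : γ y ≠ ⊥)
    (ht0 : 0 ≤ t) (ht1 : t ≤ 1) (hb : (b : EReal) ≤ (φ x + γ x) - (φ y + γ y)) :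
    (⟪gradient φ x, t • (y - x)⟫ : EReal) + (γ (x + t • (y - x)) - γ x)
      ≤ ((-(t * b) - t * (μ / 2) * ‖y - x‖ ^ 2 : ℝ) : EReal) := by
  lift γ y to ℝ using ⟨hγy_ne_top, hγy_ne_bot⟩ with s hs
  have hconv := hγ x y (1 - t) t (by linarith) ht0 (by ring)
  rw [← hs, show (1 - t) • x + t • y = x + t • (y - x) by module] at hconv
  generalize γ (x + t • (y - x)) = G at hconv ⊢
  induction hx : γ x using EReal.rec with
  | bot => exact absurd hx hγx_ne_bot
  | top => simp
  | coe r =>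
    rw [hx] at hconv hb
    induction G using EReal.rec with
    | bot => simp
    | top => norm_cast at hconv
    | coe c =>
      norm_cast at hconv hb ⊢
      have hfirst := mul_le_mul_of_nonneg_left (hsc.add_inner_gradient_add_sq_le hφ y) ht0
      have hgap := mul_le_mul_of_nonneg_left hb ht0
      rw [inner_smul_right]
      linarith

end Gradient

section ProximalGradient

variable {n m : ℕ} {f : Fin m → EuclideanSpace ℝ (Fin n) → ℝ}
  {g : Fin m → EuclideanSpace ℝ (Fin n) → EReal}

theorem add_le_add_psi_add_sq {i : Fin m} {K : ℝ≥0} {ℓ : ℝ} {x : EuclideanSpace ℝ (Fin n)}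
    (hf : Differentiable ℝ (f i)) (hK : LipschitzWith K (gradient (f i))) (hKℓ : (K : ℝ) ≤ ℓ)
    (hgx_ne_top : g i x ≠ ⊤) (hgx_ne_bot : g i x ≠ ⊥) (d : EuclideanSpace ℝ (Fin n)) :
    (f i (x + d) : EReal) + g i (x + d)
      ≤ (f i x + g i x) + (psi f g x d + ((ℓ / 2 * ‖d‖ ^ 2 : ℝ) : EReal)) := by
  lift g i x to ℝ using ⟨hgx_ne_top, hgx_ne_bot⟩ with r hr
  calc (f i (x + d) : EReal) + g i (x + d)
      ≤ ((f i x : EReal) + r) + ((⟪gradient (f i) x, d⟫ : EReal) + (g i (x + d) - r)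
          + ((ℓ / 2 * ‖d‖ ^ 2 : ℝ) : EReal)) := by
        have hdesc := hf.le_add_inner_gradient_add_sq hK x d
        have hKd : (K : ℝ) / 2 * ‖d‖ ^ 2 ≤ ℓ / 2 * ‖d‖ ^ 2 := by gcongr
        generalize g i (x + d) = G
        induction G using EReal.rec with
        | bot => simp
        | top => simp only [← EReal.coe_add, EReal.top_sub_coe, EReal.coe_add_top,
            EReal.top_add_coe, le_top]
        | coe c => norm_cast; linarith
    _ ≤ (f i x + r) + (psi f g x d + ((ℓ / 2 * ‖d‖ ^ 2 : ℝ) : EReal)) := by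
        gcongr
        exact hr ▸ le_iSup (fun j => (⟪gradient (f j) x, d⟫ : EReal) + (g j (x + d) - g j x)) i

theorem psi_smul_sub_add_sq_le {x y : EuclideanSpace ℝ (Fin n)} {t ℓ μ b : ℝ}
    (hf : ∀ i, DifferentiableAt ℝ (f i) x) (hsc : ∀ i, StrongConvexOn univ μ (f i))
    (hg : ∀ i, ERealConvexOn (g i)) (hg_ne_bot : ∀ i z, g i z ≠ ⊥) (hgy : ∀ i, g i y ≠ ⊤)
    (ht0 : 0 ≤ t) (ht1 : t ≤ 1) (htℓ : ℓ * t ≤ μ)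
    (hb : ∀ i, (b : EReal) ≤ (f i x + g i x) - (f i y + g i y)) :
    psi f g x (t • (y - x)) + ((ℓ / 2 * ‖t • (y - x)‖ ^ 2 : ℝ) : EReal)
      ≤ ((-(t * b) : ℝ) : EReal) := by
  calc psi f g x (t • (y - x)) + ((ℓ / 2 * ‖t • (y - x)‖ ^ 2 : ℝ) : EReal)
      ≤ ((-(t * b) - t * (μ / 2) * ‖y - x‖ ^ 2 : ℝ) : EReal)
          + ((ℓ / 2 * ‖t • (y - x)‖ ^ 2 : ℝ) : EReal) := by
        gcongr
        exact iSup_le fun i => inner_gradient_add_sub_le_of_strongConvexOn (hf i) (hsc i) (hg i)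
          (hg_ne_bot i x) (hgy i) (hg_ne_bot i y) ht0 ht1 (hb i)
    _ ≤ ((-(t * b) : ℝ) : EReal) := by
        norm_cast
        rw [norm_smul, Real.norm_of_nonneg ht0, mul_pow]
        have : t * (ℓ * t) * ‖y - x‖ ^ 2 ≤ t * μ * ‖y - x‖ ^ 2 := by gcongr
        linarith

theorem u0_add_le [Nonempty (Fin m)] {K : ℝ≥0} {ℓ μ t : ℝ} {x d : EuclideanSpace ℝ (Fin n)}
    (hf : ∀ i, Differentiable ℝ (f i)) (hK : ∀ i, LipschitzWith K (gradient (f i)))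
    (hKℓ : (K : ℝ) ≤ ℓ) (hsc : ∀ i, StrongConvexOn univ μ (f i))
    (hg : ∀ i, ERealConvexOn (g i)) (hg_ne_bot : ∀ i z, g i z ≠ ⊥)
    (ht0 : 0 ≤ t) (ht1 : t < 1) (htℓ : ℓ * t ≤ μ)
    (hd : ∀ d', psi f g x d + ((ℓ / 2 * ‖d‖ ^ 2 : ℝ) : EReal)
      ≤ psi f g x d' + ((ℓ / 2 * ‖d'‖ ^ 2 : ℝ) : EReal)) :
    u0 (fun i z => (f i z : EReal) + g i z) (x + d)
      ≤ ((1 - t : ℝ) : EReal) * u0 (fun i z => (f i z : EReal) + g i z) x := by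
  set F : Fin m → EuclideanSpace ℝ (Fin n) → EReal := fun i z => (f i z : EReal) + g i z
  rcases eq_or_ne (u0 F x) ⊤ with htop | htop
  · rw [htop, EReal.coe_mul_top_of_pos (by linarith)]
    exact le_top
  refine iSup_le fun y => ?_
  by_cases hy : ∃ i, g i y = ⊤
  · obtain ⟨i, hi⟩ := hy
    refine (iInf_le _ i).trans ?_
    simp [F, hi]
  simp only [not_exists] at hy
  obtain ⟨i, hi⟩ := Finite.exists_min (fun i => F i x - F i y)
  have hle_u0 : F i x - F i y ≤ u0 F x :=
    (le_iInf hi).trans (le_iSup (fun y => ⨅ i, F i x - F i y) y)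
  obtain ⟨s, hs⟩ : ∃ s : ℝ, g i y = s := ⟨_, (EReal.coe_toReal (hy i) (hg_ne_bot i y)).symm⟩
  have hgx : g i x ≠ ⊤ := by
    intro hx
    refine htop (top_le_iff.1 (le_trans ?_ hle_u0))
    simp [F, hx, hs, ← EReal.coe_add]
  obtain ⟨r, hr⟩ : ∃ r : ℝ, g i x = r := ⟨_, (EReal.coe_toReal hgx (hg_ne_bot i x)).symm⟩
  set b := f i x + r - (f i y + s)
  have hb : F i x - F i y = b := by simp only [F, hr, hs, b]; norm_cast
  have hdecrease : F i (x + d) ≤ F i x + ((-(t * b) : ℝ) : EReal) :=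
    (add_le_add_psi_add_sq (hf i) (hK i) hKℓ hgx (hg_ne_bot i x) d).trans
      (add_le_add le_rfl ((hd _).trans (psi_smul_sub_add_sq_le (fun i => (hf i).differentiableAt)
        hsc hg hg_ne_bot hy ht0 ht1.le htℓ (fun j => hb ▸ hi j))))
  calc ⨅ j, F j (x + d) - F j y ≤ F i (x + d) - F i y := iInf_le _ i
    _ ≤ F i x + ((-(t * b) : ℝ) : EReal) - F i y := EReal.sub_le_sub hdecrease le_rfl
    _ = ((1 - t : ℝ) : EReal) * b := by simp only [F, hr, hs, b]; norm_cast; ring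
    _ ≤ ((1 - t : ℝ) : EReal) * u0 F x := by gcongr; exact hb ▸ hle_u0

end ProximalGradient

theorem step_ratio_bounds {L μ ℓ : ℝ} (hL : 0 ≤ L) (hμ : 0 < μ) (hℓ : L < ℓ) :
    0 ≤ L / (ℓ * max (L / μ) 1) ∧ L / (ℓ * max (L / μ) 1) < 1 ∧
      ℓ * (L / (ℓ * max (L / μ) 1)) ≤ μ := by
  have hℓ0 : 0 < ℓ := hL.trans_lt hℓ
  have hα : 1 ≤ max (L / μ) 1 := le_max_right _ _
  have hαL : L ≤ μ * max (L / μ) 1 := (div_le_iff₀' hμ).1 (le_max_left _ _)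
  refine ⟨by positivity, (div_lt_one (by positivity)).2 (by nlinarith), ?_⟩
  rw [mul_div_assoc', mul_div_mul_left _ _ hℓ0.ne', div_le_iff₀ (by positivity)]
  exact hαL

theorem proximal_gradient_rate_strongly_convex_u0_general
    {n m : ℕ}
    (f : Fin m → EuclideanSpace ℝ (Fin n) → ℝ)
    (g : Fin m → EuclideanSpace ℝ (Fin n) → EReal)
    (hf : ∀ i, ContDiff ℝ 1 (f i))
    (hg_ne_bot : ∀ i x, g i x ≠ ⊥)
    (hg_convex : ∀ i, ERealConvexOn (g i))
    (F : Fin m → EuclideanSpace ℝ (Fin n) → EReal)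
    (hF : ∀ i x, F i x = (f i x : EReal) + g i x)
    (Li : Fin m → ℝ) (hLi : ∀ i, 0 < Li i)
    (hlip : ∀ i, LipschitzWith (Li i).toNNReal (gradient (f i)))
    (L : ℝ) (hL : IsGreatest (Set.range Li) L)
    (μi : Fin m → ℝ) (hμi : ∀ i, 0 < μi i)
    (hf_sc : ∀ i, StrongConvexOn Set.univ (μi i) (f i))
    (μ : ℝ) (hμ : IsLeast (Set.range μi) μ)
    (ℓ : ℝ) (hℓ : L < ℓ)
    (x d : ℕ → EuclideanSpace ℝ (Fin n))
    (hmin : ∀ (k : ℕ) (d' : EuclideanSpace ℝ (Fin n)),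
      psi f g (x k) (d k) + ((ℓ / 2 * ‖d k‖ ^ 2 : ℝ) : EReal) ≤
        psi f g (x k) d' + ((ℓ / 2 * ‖d'‖ ^ 2 : ℝ) : EReal))
    (hstep : ∀ k, x (k + 1) = x k + d k) :
    ∀ k : ℕ, u0 F (x (k + 1)) ≤
      ((1 - L / (ℓ * max (L / μ) 1) : ℝ) : EReal) * u0 F (x k) := by
  obtain ⟨⟨iL, rfl⟩, hLmax⟩ := hL
  obtain ⟨⟨iμ, rfl⟩, hμmin⟩ := hμ
  have : Nonempty (Fin m) := ⟨iL⟩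
  obtain rfl : F = fun i z => (f i z : EReal) + g i z := funext fun i => funext (hF i)
  obtain ⟨ht0, ht1, htℓ⟩ := step_ratio_bounds (hLi iL).le (hμi iμ) hℓ
  have hℓ0 : 0 ≤ ℓ := (hLi iL).le.trans hℓ.le
  intro k
  rw [hstep k]
  exact u0_add_le (fun i => (hf i).differentiable one_ne_zero)
    (fun i => (hlip i).weaken (Real.toNNReal_le_toNNReal ((hLmax ⟨i, rfl⟩).trans hℓ.le)))
    (Real.coe_toNNReal ℓ hℓ0).le (fun i => (hf_sc i).mono (hμmin ⟨i, rfl⟩)) hg_convex hg_ne_bot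
    ht0 ht1 htℓ (hmin k)

/-- Linear convergence of u₀ in the strongly convex case: if each fᵢ is strongly convex with
modulus μᵢ > 0 and μ := minᵢ μᵢ, then the multiobjective proximal gradient method with ℓ > L
satisfies u₀(x^{k+1}) ≤ (1 − L/(ℓ·max{L/μ, 1}))·u₀(x^k) for all k. -/
theorem proximal_gradient_rate_strongly_convex_u0
    {n m : ℕ} (hm : 0 < m)
    (f : Fin m → EuclideanSpace ℝ (Fin n) → ℝ)
    (g : Fin m → EuclideanSpace ℝ (Fin n) → EReal)
    (hf : ∀ i, ContDiff ℝ 1 (f i))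
    (hg_lsc : ∀ i, LowerSemicontinuous (g i))
    (hg_ne_bot : ∀ i x, g i x ≠ ⊥)
    (hg_proper : ∀ i, ∃ x, g i x ≠ ⊤)
    (hg_convex : ∀ i, ERealConvexOn (g i))
    (F : Fin m → EuclideanSpace ℝ (Fin n) → EReal)
    (hF : ∀ i x, F i x = (f i x : EReal) + g i x)
    (Li : Fin m → ℝ) (hLi : ∀ i, 0 < Li i)
    (hlip : ∀ i, LipschitzWith (Li i).toNNReal (gradient (f i)))
    (L : ℝ) (hL : IsGreatest (Set.range Li) L)
    (μi : Fin m → ℝ) (hμi : ∀ i, 0 < μi i)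
    (hf_sc : ∀ i, StrongConvexOn Set.univ (μi i) (f i))
    (μ : ℝ) (hμ : IsLeast (Set.range μi) μ)
    (ℓ : ℝ) (hℓ : L < ℓ)
    (x d : ℕ → EuclideanSpace ℝ (Fin n))
    (hmin : ∀ (k : ℕ) (d' : EuclideanSpace ℝ (Fin n)),
      psi f g (x k) (d k) + ((ℓ / 2 * ‖d k‖ ^ 2 : ℝ) : EReal) ≤
        psi f g (x k) d' + ((ℓ / 2 * ‖d'‖ ^ 2 : ℝ) : EReal))
    (hstep : ∀ k, x (k + 1) = x k + d k) :
    ∀ k : ℕ, u0 F (x (k + 1)) ≤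
      ((1 - L / (ℓ * max (L / μ) 1) : ℝ) : EReal) * u0 F (x k) :=
  proximal_gradient_rate_strongly_convex_u0_general f g hf hg_ne_bot hg_convex F hF Li hLi hlip L hL
    μi hμi hf_sc μ hμ ℓ hℓ x d hmin hstep
end
end
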